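/- Let G be the (n×n)-grid and let Q ⊆ V_1 be a right-pyramidal set with two different right spots (i_1,j_1) and (i_2,j_2), such that (i_1,j_1) has the largest and (i_2,j_2) the smallest x-coordinate among all right spots of Q. Let Q' = (Q \ {(i_2,j_2)}) ∪ {(i_1+1, j_1+1)}. Then Q' is also a right-pyramidal set and δ(Q') ≤ δ(Q). -/

import Mathlib

/-- Vertices of the (n × n)-grid, as pairs of integers in {1, ..., n}. -/
def gridSet (n : ℕ) : Finset (ℕ × ℕ) := Finset.Icc 1 n ×ˢ Finset.Icc 1 n

/-- Grid adjacency: (x,y) ~ (x',y') iff |x-x'| + |y-y'| = 1. -/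
def gridAdj (p q : ℕ × ℕ) : Prop :=
  |(p.1 : ℤ) - q.1| + |(p.2 : ℤ) - q.2| = 1

instance (p q : ℕ × ℕ) : Decidable (gridAdj p q) := by unfold gridAdj; infer_instance

/-- V₁: the grid vertices (x, y) with x + y even. -/
def V1 (n : ℕ) : Finset (ℕ × ℕ) := (gridSet n).filter (fun p => Even (p.1 + p.2))

/-- N(S): the set of grid vertices outside S that are adjacent to some vertex of S. -/
def gridNbr (n : ℕ) (S : Finset (ℕ × ℕ)) : Finset (ℕ × ℕ) :=
  (gridSet n).filter (fun q => q ∉ S ∧ ∃ p ∈ S, gridAdj p q)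

/-- δ(S) = |N(S)|. -/
def deltaN (n : ℕ) (S : Finset (ℕ × ℕ)) : ℕ := (gridNbr n S).card

/-- A set Q ⊆ V₁ is pyramidal if for every (x, y) ∈ Q with y ≥ 2:
(x-1, y-1) ∈ Q whenever x ≥ 2, and (x+1, y-1) ∈ Q whenever x ≤ n-1. -/
def Pyramidal (n : ℕ) (Q : Finset (ℕ × ℕ)) : Prop :=
  ∀ x y : ℕ, (x, y) ∈ Q → 2 ≤ y →
    (2 ≤ x → (x - 1, y - 1) ∈ Q) ∧ (x + 1 ≤ n → (x + 1, y - 1) ∈ Q)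

/-- A pyramidal set Q is right-pyramidal if (x,y) ∈ Q and x ≤ n-2 imply (x+2, y) ∈ Q. -/
def RightPyramidal (n : ℕ) (Q : Finset (ℕ × ℕ)) : Prop :=
  Pyramidal n Q ∧ ∀ x y : ℕ, (x, y) ∈ Q → x + 2 ≤ n → (x + 2, y) ∈ Q

/-- A right-pyramidal set Q has a right spot at (i, j) if (i, j) ∈ Q and
(i+1, j+1) ∈ V(G) \ Q. -/
def RightSpot (n : ℕ) (Q : Finset (ℕ × ℕ)) (i j : ℕ) : Prop :=
  (i, j) ∈ Q ∧ (i + 1, j + 1) ∈ gridSet n ∧ (i + 1, j + 1) ∉ Q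

/- Once (i₂, j₂) is removed, the vertex (i₂, j₂ + 1) has no neighbour left in Q' (the others
are excluded by the right-pyramidal closure at the right spot (i₂, j₂)), so it leaves the
boundary. The only vertex that can enter the boundary is (i₁ + 1, j₁ + 2): the other neighbours
of (i₁ + 1, j₁ + 1) are already adjacent to (i₁, j₁) or (i₁ + 2, j₁). Extremality of the two
spots is exactly what keeps Q' right-pyramidal. -/

open Finset

lemma mem_gridSet {n a b : ℕ} : (a, b) ∈ gridSet n ↔ 1 ≤ a ∧ a ≤ n ∧ 1 ≤ b ∧ b ≤ n := by
  simp only [gridSet, mem_product, mem_Icc]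
  omega

lemma gridAdj_iff {a b c d : ℕ} : gridAdj (a, b) (c, d) ↔
    (c = a + 1 ∧ d = b) ∨ (a = c + 1 ∧ d = b) ∨ (c = a ∧ d = b + 1) ∨ (c = a ∧ b = d + 1) := by
  change |(a : ℤ) - c| + |(b : ℤ) - d| = 1 ↔ _
  rcases abs_cases ((a : ℤ) - c) with ⟨h₁, _⟩ | ⟨h₁, _⟩ <;>
    rcases abs_cases ((b : ℤ) - d) with ⟨h₂, _⟩ | ⟨h₂, _⟩ <;>
      rw [h₁, h₂] <;> omega

lemma gridAdj.not_even {p q : ℕ × ℕ} (h : gridAdj p q) (hp : Even (p.1 + p.2)) :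
    ¬Even (q.1 + q.2) := by
  obtain ⟨a, b⟩ := p
  obtain ⟨c, d⟩ := q
  rw [gridAdj_iff] at h
  simp only [Nat.even_iff] at hp ⊢
  omega

lemma even_of_mem_V1 {n : ℕ} {p : ℕ × ℕ} (hp : p ∈ V1 n) : Even (p.1 + p.2) :=
  (mem_filter.mp hp).2

namespace RightPyramidal

variable {n : ℕ} {Q : Finset (ℕ × ℕ)} {i j : ℕ}

lemma notMem_left_of_rightSpot (hQ : RightPyramidal n Q) (hs : RightSpot n Q i j) {a : ℕ}
    (ha : a + 1 = i) : (a, j + 1) ∉ Q := by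
  obtain ⟨-, hg, hnot⟩ := hs
  have hn := (mem_gridSet.mp hg).2.1
  intro h
  exact hnot (by simpa [← ha, add_assoc] using hQ.2 a (j + 1) h (by omega))

lemma notMem_above_rightSpot (hQ : RightPyramidal n Q) (hs : RightSpot n Q i j) :
    (i, j + 2) ∉ Q := by
  obtain ⟨-, hg, hnot⟩ := hs
  have hn := (mem_gridSet.mp hg).2.1
  exact fun h => hnot ((hQ.1 i (j + 2) h (by omega)).2 hn)

/-- Right extension of a rightmost right spot cannot stop one row higher, or (i + 2, j) would
be a right spot further right. -/
lemma mem_of_rightmost_rightSpot (hQ : RightPyramidal n Q) (hs : RightSpot n Q i j)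
    (hmax : ∀ i' j', RightSpot n Q i' j' → i' ≤ i) (hi : i + 3 ≤ n) : (i + 3, j + 1) ∈ Q := by
  obtain ⟨hij, hg, -⟩ := hs
  have hj := (mem_gridSet.mp hg).2.2.2
  by_contra h
  have := hmax (i + 2) j ⟨hQ.2 i j hij (by omega), mem_gridSet.mpr (by omega), h⟩
  omega

lemma erase_leftmost_rightSpot (hQ : RightPyramidal n Q) (hs : RightSpot n Q i j)
    (hmin : ∀ i' j', RightSpot n Q i' j' → i ≤ i') : RightPyramidal n (Q.erase (i, j)) := by
  have hi := (mem_gridSet.mp hs.2.1).2.1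
  have hj := (mem_gridSet.mp hs.2.1).2.2.2
  refine ⟨fun x y hxy hy => ?_, fun x y hxy hx => ?_⟩
  · obtain ⟨-, hxyQ⟩ := mem_erase.mp hxy
    obtain ⟨hleft, hright⟩ := hQ.1 x y hxyQ hy
    refine ⟨fun hx => mem_erase.mpr ⟨?_, hleft hx⟩, fun hx => mem_erase.mpr ⟨?_, hright hx⟩⟩
    · rintro ⟨⟩
      exact hs.2.2 (by convert hxyQ using 2 <;> omega)
    · rintro ⟨⟩
      exact hQ.notMem_left_of_rightSpot hs (a := x) (by omega) (by convert hxyQ using 2; omega)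
  · obtain ⟨-, hxyQ⟩ := mem_erase.mp hxy
    refine mem_erase.mpr ⟨fun h => ?_, hQ.2 x y hxyQ hx⟩
    obtain ⟨hx, rfl⟩ := Prod.mk.inj h
    have hleft := hQ.notMem_left_of_rightSpot hs (a := x + 1) (by omega)
    have := hmin x y ⟨hxyQ, mem_gridSet.mpr (by omega), hleft⟩
    omega

protected lemma insert (hQ : RightPyramidal n Q) (hij : (i, j) ∈ Q)
    (hright : i + 3 ≤ n → (i + 3, j + 1) ∈ Q) : RightPyramidal n (insert (i + 1, j + 1) Q) := by
  refine ⟨fun x y hxy hy => ?_, fun x y hxy hx => ?_⟩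
  · rcases mem_insert.mp hxy with h | h
    · obtain ⟨rfl, rfl⟩ := Prod.mk.inj h
      exact ⟨fun _ => mem_insert_of_mem hij, fun hx => mem_insert_of_mem (hQ.2 i j hij hx)⟩
    · obtain ⟨hleft, hright⟩ := hQ.1 x y h hy
      exact ⟨fun hx => mem_insert_of_mem (hleft hx), fun hx => mem_insert_of_mem (hright hx)⟩
  · rcases mem_insert.mp hxy with h | h
    · obtain ⟨rfl, rfl⟩ := Prod.mk.inj h
      exact mem_insert_of_mem (hright hx)
    · exact mem_insert_of_mem (hQ.2 x y h hx)

end RightPyramidal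

section Move

variable {n : ℕ} {Q : Finset (ℕ × ℕ)} {i₁ j₁ i₂ j₂ : ℕ}

lemma mem_gridNbr_above_rightSpot (hQ : Q ⊆ V1 n) (hs : RightSpot n Q i₂ j₂) :
    (i₂, j₂ + 1) ∈ gridNbr n Q := by
  obtain ⟨hij, hg, -⟩ := hs
  have hadj : gridAdj (i₂, j₂) (i₂, j₂ + 1) := gridAdj_iff.mpr (by omega)
  have := mem_gridSet.mp hg
  have := mem_gridSet.mp (mem_filter.mp (hQ hij)).1
  exact mem_filter.mpr ⟨mem_gridSet.mpr (by omega),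
    fun h => hadj.not_even (even_of_mem_V1 (hQ hij)) (even_of_mem_V1 (hQ h)), _, hij, hadj⟩

lemma notMem_gridNbr_move (hrp : RightPyramidal n Q) (hs₂ : RightSpot n Q i₂ j₂)
    (hne : (i₁, j₁) ≠ (i₂, j₂)) (hle : i₂ ≤ i₁) :
    (i₂, j₂ + 1) ∉ gridNbr n (insert (i₁ + 1, j₁ + 1) (Q.erase (i₂, j₂))) := by
  rintro hu
  obtain ⟨-, -, ⟨a, b⟩, hp, hadj⟩ := mem_filter.mp hu
  rw [gridAdj_iff] at hadj
  rcases mem_insert.mp hp with h | h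
  · obtain ⟨rfl, rfl⟩ := Prod.mk.inj h
    have : ¬(i₁ = i₂ ∧ j₁ = j₂) := fun ⟨h₁, h₂⟩ => hne (by rw [h₁, h₂])
    omega
  · obtain ⟨hpne, hpQ⟩ := mem_erase.mp h
    rcases hadj with ⟨ha, rfl⟩ | ⟨rfl, rfl⟩ | ⟨rfl, hb⟩ | ⟨rfl, rfl⟩
    · exact hrp.notMem_left_of_rightSpot hs₂ ha.symm hpQ
    · exact hs₂.2.2 hpQ
    · exact hpne (by rw [show b = j₂ by omega])
    · exact hrp.notMem_above_rightSpot hs₂ hpQ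

lemma mem_gridNbr_of_mem_gridNbr_move (hQ : Q ⊆ V1 n) (hrp : RightPyramidal n Q)
    (hs₁ : RightSpot n Q i₁ j₁) {c d : ℕ}
    (hq : (c, d) ∈ gridNbr n (insert (i₁ + 1, j₁ + 1) (Q.erase (i₂, j₂))))
    (hqt : (c, d) ≠ (i₁ + 1, j₁ + 2)) : (c, d) ∈ gridNbr n Q := by
  obtain ⟨hqg, -, p, hp, hadj⟩ := mem_filter.mp hq
  have hpeven : Even (p.1 + p.2) := by
    rcases mem_insert.mp hp with rfl | h
    · have := even_of_mem_V1 (hQ hs₁.1)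
      simp only [Nat.even_iff] at this ⊢
      omega
    · exact even_of_mem_V1 (hQ (mem_erase.mp h).2)
  refine mem_filter.mpr ⟨hqg, fun h => hadj.not_even hpeven (even_of_mem_V1 (hQ h)), ?_⟩
  rcases mem_insert.mp hp with rfl | h
  · have hc := (mem_gridSet.mp hqg).2.1
    rw [gridAdj_iff] at hadj
    rcases hadj with ⟨rfl, rfl⟩ | ⟨hc', rfl⟩ | ⟨rfl, rfl⟩ | ⟨rfl, hd⟩
    · exact ⟨_, hrp.2 i₁ j₁ hs₁.1 (by omega), gridAdj_iff.mpr (by omega)⟩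
    · exact ⟨_, hs₁.1, gridAdj_iff.mpr (by omega)⟩
    · exact absurd rfl hqt
    · exact ⟨_, hs₁.1, gridAdj_iff.mpr (by omega)⟩
  · exact ⟨p, (mem_erase.mp h).2, hadj⟩

lemma deltaN_move_le (hQ : Q ⊆ V1 n) (hrp : RightPyramidal n Q) (hs₁ : RightSpot n Q i₁ j₁)
    (hs₂ : RightSpot n Q i₂ j₂) (hne : (i₁, j₁) ≠ (i₂, j₂)) (hle : i₂ ≤ i₁) :
    deltaN n (insert (i₁ + 1, j₁ + 1) (Q.erase (i₂, j₂))) ≤ deltaN n Q := by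
  have hsub : gridNbr n (insert (i₁ + 1, j₁ + 1) (Q.erase (i₂, j₂))) ⊆
      insert (i₁ + 1, j₁ + 2) ((gridNbr n Q).erase (i₂, j₂ + 1)) := by
    rintro ⟨c, d⟩ hq
    by_cases hqt : (c, d) = (i₁ + 1, j₁ + 2)
    · exact mem_insert.mpr (.inl hqt)
    · refine mem_insert_of_mem (mem_erase.mpr ⟨?_, ?_⟩)
      · exact fun h => notMem_gridNbr_move hrp hs₂ hne hle (h ▸ hq)
      · exact mem_gridNbr_of_mem_gridNbr_move hQ hrp hs₁ hq hqt
  calc deltaN n (insert (i₁ + 1, j₁ + 1) (Q.erase (i₂, j₂)))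
      ≤ #(insert (i₁ + 1, j₁ + 2) ((gridNbr n Q).erase (i₂, j₂ + 1))) := card_le_card hsub
    _ ≤ #((gridNbr n Q).erase (i₂, j₂ + 1)) + 1 := card_insert_le _ _
    _ = deltaN n Q := card_erase_add_one (mem_gridNbr_above_rightSpot hQ hs₂)

end Move

/-- Let Q ⊆ V₁ be a right-pyramidal set with two different right spots (i₁, j₁) and
(i₂, j₂), such that (i₁, j₁) has the largest and (i₂, j₂) the smallest x-coordinate among
all right spots of Q. Then Q' = (Q \ {(i₂, j₂)}) ∪ {(i₁ + 1, j₁ + 1)} is also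
right-pyramidal and δ(Q') ≤ δ(Q). -/
theorem rightSpot_move (n : ℕ) (Q : Finset (ℕ × ℕ)) (hQ : Q ⊆ V1 n)
    (hrp : RightPyramidal n Q) (i₁ j₁ i₂ j₂ : ℕ)
    (hs₁ : RightSpot n Q i₁ j₁) (hs₂ : RightSpot n Q i₂ j₂)
    (hne : (i₁, j₁) ≠ (i₂, j₂))
    (hmax : ∀ i j, RightSpot n Q i j → i ≤ i₁)
    (hmin : ∀ i j, RightSpot n Q i j → i₂ ≤ i) :
    RightPyramidal n (insert (i₁ + 1, j₁ + 1) (Q.erase (i₂, j₂))) ∧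
    deltaN n (insert (i₁ + 1, j₁ + 1) (Q.erase (i₂, j₂))) ≤ deltaN n Q := by
  have hle : i₂ ≤ i₁ := hmax i₂ j₂ hs₂
  refine ⟨(hrp.erase_leftmost_rightSpot hs₂ hmin).insert (mem_erase.mpr ⟨hne, hs₁.1⟩)
    fun hi => mem_erase.mpr ⟨?_, hrp.mem_of_rightmost_rightSpot hs₁ hmax hi⟩,
    deltaN_move_le hQ hrp hs₁ hs₂ hne hle⟩
  rintro ⟨⟩
  omega
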